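/- In a group with elements x₁, x₂, x₃, x₄ satisfying (x₁x₂)² = (x₂x₁)², [x₃, x₁⁻¹x₂x₁] = e, and [x₄, x₃x₂x₁x₂x₁⁻¹x₂⁻¹x₃⁻¹] = e, it follows that [x₄, x₁⁻¹x₂x₁] = e. -/
import Mathlib

/-- Given `(x₁x₂)² = (x₂x₁)²`, `[x₃, x₁⁻¹x₂x₁] = e`, and
`[x₄, x₃x₂x₁x₂x₁⁻¹x₂⁻¹x₃⁻¹] = e`, it follows that `[x₄, x₁⁻¹x₂x₁] = e`. -/
theorem stmt_11 {G : Type*} [Group G] (x₁ x₂ x₃ x₄ : G)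
    (h12 : (x₁ * x₂) ^ 2 = (x₂ * x₁) ^ 2)
    (h3 : x₃ * (x₁⁻¹ * x₂ * x₁) = (x₁⁻¹ * x₂ * x₁) * x₃)
    (h4 : x₄ * (x₃ * x₂ * x₁ * x₂ * x₁⁻¹ * x₂⁻¹ * x₃⁻¹) =
      (x₃ * x₂ * x₁ * x₂ * x₁⁻¹ * x₂⁻¹ * x₃⁻¹) * x₄) :
    x₄ * (x₁⁻¹ * x₂ * x₁) = (x₁⁻¹ * x₂ * x₁) * x₄ := by
  have h12' : x₁ * x₂ * x₁ * x₂ = x₂ * x₁ * x₂ * x₁ := by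
    rw [sq, sq] at h12
    simpa [mul_assoc] using h12
  have key : x₂ * x₁ * x₂ * x₁⁻¹ * x₂⁻¹ = x₁⁻¹ * x₂ * x₁ := by
    calc x₂ * x₁ * x₂ * x₁⁻¹ * x₂⁻¹
        = x₁⁻¹ * (x₁ * x₂ * x₁ * x₂) * x₁⁻¹ * x₂⁻¹ := by group
      _ = x₁⁻¹ * (x₂ * x₁ * x₂ * x₁) * x₁⁻¹ * x₂⁻¹ := by rw [h12']
      _ = x₁⁻¹ * x₂ * x₁ := by group
  have h3' : x₃ * (x₁⁻¹ * x₂ * x₁) * x₃⁻¹ = x₁⁻¹ * x₂ * x₁ := by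
    rw [h3]; group
  have key2 : x₃ * x₂ * x₁ * x₂ * x₁⁻¹ * x₂⁻¹ * x₃⁻¹ = x₁⁻¹ * x₂ * x₁ := by
    calc x₃ * x₂ * x₁ * x₂ * x₁⁻¹ * x₂⁻¹ * x₃⁻¹
        = x₃ * (x₂ * x₁ * x₂ * x₁⁻¹ * x₂⁻¹) * x₃⁻¹ := by group
      _ = x₃ * (x₁⁻¹ * x₂ * x₁) * x₃⁻¹ := by rw [key]
      _ = x₁⁻¹ * x₂ * x₁ := h3'
  rw [key2] at h4
  exact h4
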